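/- arXiv:0910.0499 — 4 statements merged into one kernel-verified Lean document; each statement's English description precedes it below -/
import Mathlib

section
/- For positive integers K ≤ P and n ≥ 3, the expected number of triangles in the random key graph K(n; K,P) equals C(n,3)·β(K,P), where β(K,P) = (1−q(K,P))³ + q(K,P)³ − q(K,P)·r(K,P). -/
open Finset

/-- `q(K,P) = C(P-K,K)/C(P,K)` if `2K ≤ P`, else 0. -/
noncomputable def qKP (K P : ℕ) : ℝ :=
  if 2 * K ≤ P then ((P - K).choose K : ℝ) / (P.choose K) else 0

/-- `r(K,P) = C(P-2K,K)/C(P,K)` if `3K ≤ P`, else 0. -/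
noncomputable def rKP (K P : ℕ) : ℝ :=
  if 3 * K ≤ P then ((P - 2 * K).choose K : ℝ) / (P.choose K) else 0

/-- `β(K,P) = (1-q)³ + q³ - q r`. -/
noncomputable def betaKP (K P : ℕ) : ℝ :=
  (1 - qKP K P) ^ 3 + (qKP K P) ^ 3 - qKP K P * rKP K P

/-- Sample space of the random key graph: assignments of a `K`-subset of the key pool
`Fin P` to each of the `n` nodes (all equally likely). -/
def keySpace (n K P : ℕ) : Finset (Fin n → Finset (Fin P)) :=
  Fintype.piFinset (fun _ => Finset.univ.powersetCard K)

/-- Number of (unlabelled) triangles in the key graph induced by the key assignment `f`: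
unordered triples of nodes whose key rings pairwise intersect. -/
def numTriangles (n P : ℕ) (f : Fin n → Finset (Fin P)) : ℕ :=
  ((Finset.univ.powersetCard 3 : Finset (Finset (Fin n))).filter
    (fun s => ∀ i ∈ s, ∀ j ∈ s, i ≠ j → (f i ∩ f j).Nonempty)).card


/-!
Writing the number of triangles as a sum of indicators over the `C(n,3)` node triples, it
suffices to show that a fixed triple is a triangle with probability `β`; its three key rings are
independent and uniform on the `N = C(P,K)` key rings. Inclusion–exclusion over the three
disjoint pairs counts the ordered triples of pairwise intersecting `K`-sets: a `K`-set is
disjoint from `D = C(P-K,K)` others, and two disjoint `K`-sets have `R = C(P-2K,K)` common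
disjoint `K`-sets, giving `N³ - 3N²D + 3ND² - NDR = N³((1-q)³ + q³ - qr)` with `q = D/N`,
`r = R/N`.
-/

section Marginal

variable {ι κ : Type*} [Fintype ι] [DecidableEq ι] [DecidableEq κ]

theorem card_filter_piFinset_const_eqOn (A : Finset κ) (S : Finset ι) {g : ι → κ}
    (hg : ∀ i ∈ S, g i ∈ A) :
    #{f ∈ Fintype.piFinset fun _ : ι ↦ A | ∀ i ∈ S, f i = g i} = #A ^ (Fintype.card ι - #S) := by
  have hpin : {f ∈ Fintype.piFinset fun _ : ι ↦ A | ∀ i ∈ S, f i = g i}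
      = Fintype.piFinset fun i ↦ if i ∈ S then {g i} else A := by
    ext f
    simp only [mem_filter, Fintype.mem_piFinset]
    grind
  simp_rw [hpin, Fintype.card_piFinset, apply_ite card, card_singleton]
  rw [prod_ite, prod_const_one, one_mul, prod_const, filter_not, filter_mem_eq_inter, univ_inter,
    ← compl_eq_univ_sdiff, card_compl]

theorem sum_piFinset_const_apply₃ {M : Type*} [AddCommMonoid M] {a b c : ι}
    (hab : a ≠ b) (hac : a ≠ c) (hbc : b ≠ c) (A : Finset κ) (φ : κ → κ → κ → M) :
    ∑ f ∈ Fintype.piFinset fun _ : ι ↦ A, φ (f a) (f b) (f c)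
      = #A ^ (Fintype.card ι - 3) • ∑ x ∈ A, ∑ y ∈ A, ∑ z ∈ A, φ x y z := by
  have hmaps : ∀ f ∈ Fintype.piFinset fun _ : ι ↦ A, (f a, f b, f c) ∈ A ×ˢ A ×ˢ A := by
    intro f hf
    simp only [Fintype.mem_piFinset] at hf
    simp [hf]
  rw [← sum_fiberwise_of_maps_to hmaps]
  simp_rw [sum_product, smul_sum]
  refine sum_congr rfl fun x hx ↦ sum_congr rfl fun y hy ↦ sum_congr rfl fun z hz ↦ ?_
  let g : ι → κ := fun i ↦ if i = a then x else if i = b then y else z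
  have hfiber : {f ∈ Fintype.piFinset fun _ : ι ↦ A | (f a, f b, f c) = (x, y, z)}
      = {f ∈ Fintype.piFinset fun _ : ι ↦ A | ∀ i ∈ ({a, b, c} : Finset ι), f i = g i} := by
    refine filter_congr fun f _ ↦ ?_
    grind
  have hconst : ∀ f ∈ {f ∈ Fintype.piFinset fun _ : ι ↦ A | (f a, f b, f c) = (x, y, z)},
      φ (f a) (f b) (f c) = φ x y z := by
    intro f hf
    obtain ⟨ha, hb, hc⟩ : f a = x ∧ f b = y ∧ f c = z := by simpa using (mem_filter.mp hf).2
    rw [ha, hb, hc]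
  have hcard : #({a, b, c} : Finset ι) = 3 := card_eq_three.mpr ⟨a, b, c, hab, hac, hbc, rfl⟩
  rw [sum_congr rfl hconst, sum_const, hfiber,
    card_filter_piFinset_const_eqOn A _ (by simp [g, hab.symm, hac.symm, hbc.symm, *]), hcard]

end Marginal

section Inclusion

variable {α R : Type*} [CommRing R] {A : Finset α} {r : α → α → Prop} [DecidableRel r] [Std.Symm r]
  {d l : ℕ}

theorem sum_sum_card_filter_rel_and_rel (hd : ∀ x ∈ A, #{y ∈ A | r x y} = d) :
    ∑ x ∈ A, ∑ y ∈ A, #{z ∈ A | r x z ∧ r y z} = #A * d ^ 2 := by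
  have hcol : ∀ z ∈ A, #{x ∈ A | r x z} = d := fun z hz ↦ by
    simp_rw [Std.Symm.iff _ z]; exact hd z hz
  calc _ = ∑ z ∈ A, #{x ∈ A | r x z} * #{y ∈ A | r y z} := by
        simp_rw [card_filter, sum_mul_sum, ite_zero_mul_ite_zero, mul_one]
        exact (sum_congr rfl fun _ _ ↦ sum_comm).trans sum_comm
    _ = #A * d ^ 2 := by
        rw [sum_congr rfl fun z hz ↦ by rw [hcol z hz], sum_const, smul_eq_mul, sq]

theorem sum_boole_pairwise_not_rel (hd : ∀ x ∈ A, #{y ∈ A | r x y} = d)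
    (hl : ∀ x ∈ A, ∀ y ∈ A, r x y → #{z ∈ A | r x z ∧ r y z} = l) :
    ∑ x ∈ A, ∑ y ∈ A, ∑ z ∈ A, (if ¬r x y ∧ ¬r x z ∧ ¬r y z then (1 : R) else 0)
      = #A ^ 3 - 3 * #A ^ 2 * d + 3 * #A * d ^ 2 - #A * d * l := by
  let e : α → α → R := fun x y ↦ if r x y then 1 else 0
  let c : α → α → R := fun x y ↦ #{z ∈ A | r x z ∧ r y z}
  have hrow : ∀ x ∈ A, ∑ y ∈ A, e x y = d := fun x hx ↦ by simp [e, hd x hx]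
  have hinner : ∀ x ∈ A, ∀ y ∈ A,
      ∑ z ∈ A, (if ¬r x y ∧ ¬r x z ∧ ¬r y z then (1 : R) else 0)
        = (#A - 2 * d) * (1 - e x y) + c x y - l * e x y := fun x hx y hy ↦ by
    have hprod : ∀ z, (if ¬r x y ∧ ¬r x z ∧ ¬r y z then (1 : R) else 0)
        = (1 - e x y) * (1 - e x z - e y z + if r x z ∧ r y z then 1 else 0) := fun z ↦ by
      by_cases r x y <;> by_cases r x z <;> by_cases r y z <;> simp [e, *]
    have hcommon : (1 - e x y) * c x y = c x y - l * e x y := by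
      by_cases hxy : r x y
      · simp [e, c, hxy, hl x hx y hy hxy]
      · simp [e, hxy]
    rw [sum_congr rfl fun z _ ↦ hprod z, ← mul_sum, sum_add_distrib, sum_sub_distrib,
      sum_sub_distrib, hrow x hx, hrow y hy, sum_boole, mul_add, hcommon]
    simp only [sum_const, nsmul_eq_mul, mul_one]
    ring
  have hedges : ∑ x ∈ A, ∑ y ∈ A, e x y = #A * d := by
    rw [sum_congr rfl hrow, sum_const, nsmul_eq_mul]
  have hcommon_sum : ∑ x ∈ A, ∑ y ∈ A, c x y = #A * d ^ 2 := by
    simpa using congrArg (Nat.cast : ℕ → R) (sum_sum_card_filter_rel_and_rel hd)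
  calc _ = ∑ x ∈ A, ∑ y ∈ A, ((#A - 2 * d) * (1 - e x y) + c x y - l * e x y) :=
        sum_congr rfl fun x hx ↦ sum_congr rfl fun y hy ↦ hinner x hx y hy
    _ = _ := by
      simp only [sum_add_distrib, sum_sub_distrib, ← mul_sum, mul_sub, hcommon_sum, hedges,
        sum_const, nsmul_eq_mul, mul_one]
      ring

end Inclusion

theorem card_filter_disjoint_powersetCard {α : Type*} [Fintype α] [DecidableEq α]
    (s : Finset α) (k : ℕ) :
    #{t ∈ powersetCard k (univ : Finset α) | Disjoint s t} = (Fintype.card α - #s).choose k := by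
  have : {t ∈ powersetCard k (univ : Finset α) | Disjoint s t} = powersetCard k sᶜ := by
    ext t
    simp [subset_compl_iff_disjoint_left, and_comm]
  rw [this, card_powersetCard, card_compl]

-- The guards in `qKP` and `rKP` are harmless: the numerator vanishes whenever they fail.
theorem qKP_eq_div (K P : ℕ) : qKP K P = ((P - K).choose K : ℝ) / P.choose K := by
  unfold qKP
  split_ifs
  · rfl
  · rw [Nat.choose_eq_zero_of_lt (by omega), Nat.cast_zero, zero_div]

theorem rKP_eq_div (K P : ℕ) : rKP K P = ((P - 2 * K).choose K : ℝ) / P.choose K := by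
  unfold rKP
  split_ifs
  · rfl
  · rw [Nat.choose_eq_zero_of_lt (by omega), Nat.cast_zero, zero_div]

section KeyGraph

variable {n K P : ℕ}

theorem sum_boole_pairwise_inter_nonempty (hKP : K ≤ P) :
    ∑ x ∈ powersetCard K (univ : Finset (Fin P)), ∑ y ∈ powersetCard K univ,
      ∑ z ∈ powersetCard K univ,
        (if (x ∩ y).Nonempty ∧ (x ∩ z).Nonempty ∧ (y ∩ z).Nonempty then (1 : ℝ) else 0)
      = P.choose K ^ 3 * betaKP K P := by
  have hd : ∀ x ∈ powersetCard K (univ : Finset (Fin P)),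
      #{y ∈ powersetCard K univ | Disjoint x y} = (P - K).choose K := fun x hx ↦ by
    rw [card_filter_disjoint_powersetCard, Fintype.card_fin, (mem_powersetCard.mp hx).2]
  have hl : ∀ x ∈ powersetCard K (univ : Finset (Fin P)), ∀ y ∈ powersetCard K univ,
      Disjoint x y → #{z ∈ powersetCard K univ | Disjoint x z ∧ Disjoint y z}
        = (P - 2 * K).choose K := fun x hx y hy hxy ↦ by
    simp_rw [← disjoint_union_left]
    rw [card_filter_disjoint_powersetCard, Fintype.card_fin, card_union_of_disjoint hxy,
      (mem_powersetCard.mp hx).2, (mem_powersetCard.mp hy).2, two_mul]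
  simp_rw [← not_disjoint_iff_nonempty_inter]
  rw [sum_boole_pairwise_not_rel hd hl, card_powersetCard, card_univ, Fintype.card_fin, betaKP,
    qKP_eq_div, rKP_eq_div]
  have hN : (P.choose K : ℝ) ≠ 0 := by exact_mod_cast (Nat.choose_pos hKP).ne'
  field_simp
  ring

theorem card_keySpace : #(keySpace n K P) = P.choose K ^ n := by
  rw [keySpace, Fintype.card_piFinset_const, card_powersetCard, card_univ, Fintype.card_fin]

theorem pairwise_inter_nonempty_triple_iff {ι α : Type*} [DecidableEq ι] [DecidableEq α]
    (f : ι → Finset α) {a b c : ι} (hab : a ≠ b) (hac : a ≠ c) (hbc : b ≠ c) :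
    (∀ i ∈ ({a, b, c} : Finset ι), ∀ j ∈ ({a, b, c} : Finset ι), i ≠ j → (f i ∩ f j).Nonempty)
      ↔ (f a ∩ f b).Nonempty ∧ (f a ∩ f c).Nonempty ∧ (f b ∩ f c).Nonempty := by
  constructor
  · intro h
    exact ⟨h a (by simp) b (by simp) hab, h a (by simp) c (by simp) hac,
      h b (by simp) c (by simp) hbc⟩
  · rintro ⟨h1, h2, h3⟩ i hi j hj hij
    simp only [mem_insert, mem_singleton] at hi hj
    rcases hi with rfl | rfl | rfl <;> rcases hj with rfl | rfl | rfl <;>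
      first | exact absurd rfl hij | assumption | rwa [inter_comm]

theorem sum_keySpace_boole_pairwise_inter_nonempty (hKP : K ≤ P) {s : Finset (Fin n)}
    (hs : #s = 3) :
    ∑ f ∈ keySpace n K P, (if ∀ i ∈ s, ∀ j ∈ s, i ≠ j → (f i ∩ f j).Nonempty then (1 : ℝ) else 0)
      = #(keySpace n K P) * betaKP K P := by
  obtain ⟨a, b, c, hab, hac, hbc, rfl⟩ := card_eq_three.mp hs
  have hn : 3 ≤ n := by simpa [hs] using card_le_univ ({a, b, c} : Finset (Fin n))
  simp_rw [pairwise_inter_nonempty_triple_iff _ hab hac hbc]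
  have hmarginal := sum_piFinset_const_apply₃ hab hac hbc (powersetCard K (univ : Finset (Fin P)))
    fun x y z ↦ if (x ∩ y).Nonempty ∧ (x ∩ z).Nonempty ∧ (y ∩ z).Nonempty then (1 : ℝ) else 0
  beta_reduce at hmarginal
  rw [card_keySpace, keySpace, hmarginal, sum_boole_pairwise_inter_nonempty hKP,
    card_powersetCard, card_univ, Fintype.card_fin, Fintype.card_fin, nsmul_eq_mul, ← mul_assoc]
  push_cast
  rw [← pow_add, Nat.sub_add_cancel hn]

end KeyGraph

theorem expected_number_of_triangles_general (n K P : ℕ) (hKP : K ≤ P) :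
    (∑ f ∈ keySpace n K P, (numTriangles n P f : ℝ)) / ((keySpace n K P).card : ℝ)
      = (n.choose 3 : ℝ) * betaKP K P := by
  have hN : (#(keySpace n K P) : ℝ) ≠ 0 := by
    rw [card_keySpace]
    exact_mod_cast (pow_pos (Nat.choose_pos hKP) n).ne'
  simp only [numTriangles, card_filter, Nat.cast_sum, Nat.cast_ite, Nat.cast_one, Nat.cast_zero]
  rw [sum_comm, sum_congr rfl fun s hs ↦ sum_keySpace_boole_pairwise_inter_nonempty hKP
    (mem_powersetCard.mp hs).2, sum_const, card_powersetCard, card_univ, Fintype.card_fin,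
    nsmul_eq_mul]
  field_simp

theorem expected_number_of_triangles (n K P : ℕ) (hn : 3 ≤ n) (hK : 0 < K) (hKP : K ≤ P) :
    (∑ f ∈ keySpace n K P, (numTriangles n P f : ℝ)) / ((keySpace n K P).card : ℝ)
      = (n.choose 3 : ℝ) * betaKP K P :=
  expected_number_of_triangles_general n K P hKP
end

section
/- Let K, P : ℕ → ℕ be sequences with K_n ≤ P_n and K_n²/P_n → 0. Then β(K_n,P_n) is asymptotically equivalent to τ(K_n,P_n) := K_n³/P_n² + (K_n²/P_n)³, i.e., their ratio tends to 1. -/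
open Filter

/-- `τ(K,P) = K³/P² + (K²/P)³`. -/
noncomputable def tauKP (K P : ℕ) : ℝ :=
  (K : ℝ) ^ 3 / (P : ℝ) ^ 2 + ((K : ℝ) ^ 2 / (P : ℝ)) ^ 3

/-! With `t i = K / (P - i)` one has `q = ∏_{i<K} (1 - t i)`, `r = ∏_{i<K} (1 - 2 t i)` and
`β = (1 - q)³ + q (q² - r)`. For `0 ≤ b ≤ a ≤ 1` the telescoping bounds
`(∏ b) ∑ (a - b) ≤ ∏ a - ∏ b ≤ ∑ (a - b)` give `1 - q ≈ ∑ t i ≈ K²/P` and, since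
`(1 - t)² - (1 - 2t) = t²`, also `q² - r ≈ ∑ (t i)² ≈ K³/P²`, both up to factors `1 + O(K²/P)`.
Hence `β/τ` is a mediant of two ratios that tend to `1`. -/

open Finset Topology

section ProdSubProd

variable {ι R : Type*} [CommRing R] [LinearOrder R] [IsStrictOrderedRing R]
  {s : Finset ι} {a b : ι → R}

theorem prod_sub_prod_le_sum_sub (hb : ∀ i ∈ s, 0 ≤ b i) (hba : ∀ i ∈ s, b i ≤ a i)
    (ha : ∀ i ∈ s, a i ≤ 1) : ∏ i ∈ s, a i - ∏ i ∈ s, b i ≤ ∑ i ∈ s, (a i - b i) := by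
  induction s using Finset.cons_induction with
  | empty => simp
  | cons j s hj ih =>
    simp only [forall_mem_cons] at hb hba ha
    rw [prod_cons, prod_cons, sum_cons]
    have hA : ∏ i ∈ s, a i ≤ 1 := prod_le_one (fun i hi => (hb.2 i hi).trans (hba.2 i hi)) ha.2
    have hBA : ∏ i ∈ s, b i ≤ ∏ i ∈ s, a i := prod_le_prod hb.2 hba.2
    have := ih hb.2 hba.2 ha.2
    nlinarith [mul_le_mul_of_nonneg_left hA (sub_nonneg.2 hba.1),
      mul_le_of_le_one_left (sub_nonneg.2 hBA) (hba.1.trans ha.1)]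

theorem prod_mul_sum_sub_le_prod_sub_prod (hb : ∀ i ∈ s, 0 ≤ b i) (hba : ∀ i ∈ s, b i ≤ a i)
    (hb1 : ∀ i ∈ s, b i ≤ 1) :
    (∏ i ∈ s, b i) * ∑ i ∈ s, (a i - b i) ≤ ∏ i ∈ s, a i - ∏ i ∈ s, b i := by
  induction s using Finset.cons_induction with
  | empty => simp
  | cons j s hj ih =>
    simp only [forall_mem_cons] at hb hba hb1
    rw [prod_cons, prod_cons, sum_cons]
    have hB : 0 ≤ ∏ i ∈ s, b i := prod_nonneg hb.2
    have hBA : ∏ i ∈ s, b i ≤ ∏ i ∈ s, a i := prod_le_prod hb.2 hba.2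
    have := ih hb.2 hba.2 hb1.2
    nlinarith [mul_le_mul_of_nonneg_left hBA (sub_nonneg.2 hba.1),
      mul_le_of_le_one_left (mul_nonneg hB (sub_nonneg.2 hba.1)) hb1.1,
      mul_le_mul_of_nonneg_left this hb.1]

end ProdSubProd

theorem cast_choose_div_cast_choose_eq_prod {j k p : ℕ} (h : j + k ≤ p) :
    ((p - j).choose k : ℝ) / p.choose k = ∏ i ∈ range k, (1 - j / ((p : ℝ) - i)) := by
  have hfact : ∀ n : ℕ, (n.choose k : ℝ) = (∏ i ∈ range k, ((n - i : ℕ) : ℝ)) / k.factorial := by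
    intro n
    rw [eq_div_iff (by positivity), ← Nat.cast_prod, ← Nat.descFactorial_eq_prod_range,
      Nat.descFactorial_eq_factorial_mul_choose]
    push_cast; ring
  rw [hfact, hfact, div_div_div_cancel_right₀ (by positivity), ← prod_div_distrib]
  refine prod_congr rfl fun i hi => ?_
  have hi : i < k := mem_range.1 hi
  have hpi : (0 : ℝ) < p - i := by rw [sub_pos]; exact_mod_cast (by omega : i < p)
  rw [Nat.cast_sub (by omega), Nat.cast_sub (by omega), Nat.cast_sub (by omega)]
  field_simp
  ring

theorem min_div_le_add_div_add_and_le_max {a b c d : ℝ} (hc : 0 < c) (hd : 0 < d) :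
    min (a / c) (b / d) ≤ (a + b) / (c + d) ∧ (a + b) / (c + d) ≤ max (a / c) (b / d) := by
  obtain ⟨u, rfl⟩ : ∃ u, a = c * u := ⟨a / c, by field_simp⟩
  obtain ⟨v, rfl⟩ : ∃ v, b = d * v := ⟨b / d, by field_simp⟩
  rw [mul_div_cancel_left₀ _ hc.ne', mul_div_cancel_left₀ _ hd.ne', le_div_iff₀ (by positivity),
    div_le_iff₀ (by positivity)]
  constructor
  · nlinarith [min_le_left u v, min_le_right u v]
  · nlinarith [le_max_left u v, le_max_right u v]

theorem Filter.Tendsto.add_div_add {α : Type*} {l : Filter α} {a b c d : α → ℝ} {t : ℝ}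
    (hc : ∀ᶠ n in l, 0 < c n) (hd : ∀ᶠ n in l, 0 < d n)
    (hac : Tendsto (fun n => a n / c n) l (𝓝 t)) (hbd : Tendsto (fun n => b n / d n) l (𝓝 t)) :
    Tendsto (fun n => (a n + b n) / (c n + d n)) l (𝓝 t) := by
  have hbounds : ∀ᶠ n in l, _ := hc.and hd |>.mono fun n h => min_div_le_add_div_add_and_le_max
    (a := a n) (b := b n) h.1 h.2
  exact tendsto_of_tendsto_of_tendsto_of_le_of_le' (by simpa using hac.min hbd)
    (by simpa using hac.max hbd) (hbounds.mono fun _ h => h.1) (hbounds.mono fun _ h => h.2)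

section Estimates

variable {k p : ℕ}

theorem qKP_eq_prod (hp : 2 * k ≤ p) : qKP k p = ∏ i ∈ range k, (1 - k / ((p : ℝ) - i)) := by
  rw [qKP, if_pos hp, cast_choose_div_cast_choose_eq_prod (by omega)]

theorem rKP_eq_prod (hp : 3 * k ≤ p) :
    rKP k p = ∏ i ∈ range k, (1 - 2 * (k / ((p : ℝ) - i))) := by
  rw [rKP, if_pos hp, cast_choose_div_cast_choose_eq_prod (by omega)]
  push_cast
  simp_rw [mul_div_assoc]

theorem div_sub_nonneg_and_mul_le_one (m : ℕ) (hp : (m + 1) * k ≤ p) {i : ℕ} (hi : i < k) :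
    0 ≤ (k : ℝ) / (p - i) ∧ m * ((k : ℝ) / (p - i)) ≤ 1 := by
  have hmk : (m : ℝ) * k + i < p := by exact_mod_cast (by nlinarith : m * k + i < p)
  have hmk0 : (0 : ℝ) ≤ m * k := by positivity
  have hpi : (0 : ℝ) < p - i := by linarith
  refine ⟨by positivity, ?_⟩
  rw [← mul_div_assoc, div_le_one hpi]
  linarith

theorem div_sub_bounds (hk : 0 < k) (hp : 2 * k ≤ p) {i : ℕ} (hi : i < k) :
    (k : ℝ) / p ≤ k / (p - i) ∧ (k : ℝ) / (p - i) ≤ k / p * (1 + 2 * (k ^ 2 / p)) := by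
  have hk1 : (1 : ℝ) ≤ k := by exact_mod_cast hk
  have hik : (i : ℝ) + 1 ≤ k := by exact_mod_cast hi
  have hkp : 2 * (k : ℝ) ≤ p := by exact_mod_cast hp
  have hi0 : (0 : ℝ) ≤ i := i.cast_nonneg
  have hpi : (0 : ℝ) < p - i := by linarith
  have hp0 : (0 : ℝ) < p := by linarith
  refine ⟨div_le_div_of_nonneg_left (by positivity) hpi (by linarith), ?_⟩
  have hrhs : (k : ℝ) / p * (1 + 2 * (k ^ 2 / p)) = k * (p + 2 * k ^ 2) / p ^ 2 := by
    field_simp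
  rw [hrhs, div_le_div_iff₀ hpi (by positivity)]
  have hpi_le : (p : ℝ) * i ≤ p * k ^ 2 := by
    gcongr; nlinarith
  have hki_le : 2 * (k : ℝ) ^ 2 * i ≤ k ^ 2 * p := by
    nlinarith [mul_le_mul_of_nonneg_left hkp (sq_nonneg (k : ℝ))]
  nlinarith [mul_le_mul_of_nonneg_left (add_le_add hpi_le hki_le) (by positivity : (0 : ℝ) ≤ k)]

theorem sum_div_sub_bounds (hk : 0 < k) (hp : 2 * k ≤ p) :
    (k : ℝ) ^ 2 / p ≤ ∑ i ∈ range k, (k : ℝ) / (p - i) ∧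
      ∑ i ∈ range k, (k : ℝ) / (p - i) ≤ k ^ 2 / p * (1 + 2 * (k ^ 2 / p)) := by
  have hbounds (i) (hi : i ∈ range k) := div_sub_bounds hk hp (mem_range.1 hi)
  constructor
  · refine le_of_eq_of_le ?_ (card_nsmul_le_sum _ _ _ fun i hi => (hbounds i hi).1)
    rw [card_range, nsmul_eq_mul]; ring
  · refine (sum_le_card_nsmul _ _ _ fun i hi => (hbounds i hi).2).trans_eq ?_
    rw [card_range, nsmul_eq_mul]; ring

theorem sum_sq_div_sub_bounds (hk : 0 < k) (hp : 2 * k ≤ p) :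
    (k : ℝ) ^ 3 / p ^ 2 ≤ ∑ i ∈ range k, ((k : ℝ) / (p - i)) ^ 2 ∧
      ∑ i ∈ range k, ((k : ℝ) / (p - i)) ^ 2 ≤ k ^ 3 / p ^ 2 * (1 + 2 * (k ^ 2 / p)) ^ 2 := by
  have hbounds (i) (hi : i ∈ range k) := div_sub_bounds hk hp (mem_range.1 hi)
  have hnonneg : (0 : ℝ) ≤ k / p := by positivity
  constructor
  · refine le_of_eq_of_le ?_ (card_nsmul_le_sum _ _ _ fun i hi =>
      pow_le_pow_left₀ hnonneg (hbounds i hi).1 2)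
    rw [card_range, nsmul_eq_mul]; ring
  · refine (sum_le_card_nsmul _ _ _ fun i hi =>
      pow_le_pow_left₀ (hnonneg.trans (hbounds i hi).1) (hbounds i hi).2 2).trans_eq ?_
    rw [card_range, nsmul_eq_mul]; ring

theorem qKP_estimate (hk : 0 < k) (hp : 2 * k ≤ p) :
    qKP k p * (k ^ 2 / p) ≤ 1 - qKP k p ∧ 1 - qKP k p ≤ k ^ 2 / p * (1 + 2 * (k ^ 2 / p)) := by
  have ht (i) (hi : i ∈ range k) : 0 ≤ 1 - (k : ℝ) / (p - i) ∧ 1 - (k : ℝ) / (p - i) ≤ 1 := by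
    obtain ⟨h0, h1⟩ := div_sub_nonneg_and_mul_le_one 1 hp (mem_range.1 hi)
    constructor <;> linarith
  have hupper := prod_sub_prod_le_sum_sub (a := 1) (fun i hi => (ht i hi).1)
    (fun i hi => (ht i hi).2) (fun _ _ => le_rfl)
  have hlower := prod_mul_sum_sub_le_prod_sub_prod (a := 1) (fun i hi => (ht i hi).1)
    (fun i hi => (ht i hi).2) (fun i hi => (ht i hi).2)
  simp only [Pi.one_apply, prod_const_one, sub_sub_cancel] at hupper hlower
  rw [← qKP_eq_prod hp] at hupper hlower
  have hq : 0 ≤ qKP k p := (qKP_eq_prod hp).symm ▸ prod_nonneg fun i hi => (ht i hi).1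
  obtain ⟨hS_lo, hS_hi⟩ := sum_div_sub_bounds hk hp
  exact ⟨(mul_le_mul_of_nonneg_left hS_lo hq).trans hlower, hupper.trans hS_hi⟩

theorem rKP_estimate (hk : 0 < k) (hp : 3 * k ≤ p) :
    1 - 2 * (k ^ 2 / p * (1 + 2 * (k ^ 2 / p))) ≤ rKP k p ∧ rKP k p ≤ 1 := by
  have ht (i) (hi : i ∈ range k) :
      0 ≤ 1 - 2 * ((k : ℝ) / (p - i)) ∧ 1 - 2 * ((k : ℝ) / (p - i)) ≤ 1 := by
    obtain ⟨h0, h1⟩ := div_sub_nonneg_and_mul_le_one 2 hp (mem_range.1 hi)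
    constructor <;> push_cast at h1 <;> linarith
  have hupper := prod_sub_prod_le_sum_sub (a := 1) (fun i hi => (ht i hi).1)
    (fun i hi => (ht i hi).2) (fun _ _ => le_rfl)
  simp only [Pi.one_apply, prod_const_one, sub_sub_cancel, ← mul_sum] at hupper
  rw [← rKP_eq_prod hp] at hupper
  obtain ⟨-, hS_hi⟩ := sum_div_sub_bounds (p := p) hk (by omega)
  refine ⟨by linarith, ?_⟩
  rw [rKP_eq_prod hp]
  exact prod_le_one (fun i hi => (ht i hi).1) (fun i hi => (ht i hi).2)

theorem sq_qKP_sub_rKP_estimate (hk : 0 < k) (hp : 3 * k ≤ p) :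
    rKP k p * (k ^ 3 / p ^ 2) ≤ qKP k p ^ 2 - rKP k p ∧
      qKP k p ^ 2 - rKP k p ≤ k ^ 3 / p ^ 2 * (1 + 2 * (k ^ 2 / p)) ^ 2 := by
  have ht (i) (hi : i ∈ range k) : 0 ≤ 1 - 2 * ((k : ℝ) / (p - i)) ∧
      1 - 2 * ((k : ℝ) / (p - i)) ≤ (1 - (k : ℝ) / (p - i)) ^ 2 ∧
      (1 - (k : ℝ) / (p - i)) ^ 2 ≤ 1 := by
    obtain ⟨h0, h1⟩ := div_sub_nonneg_and_mul_le_one 2 hp (mem_range.1 hi)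
    push_cast at h1
    refine ⟨by linarith, by nlinarith, by nlinarith⟩
  have hdiff : ∑ i ∈ range k, ((1 - (k : ℝ) / (p - i)) ^ 2 - (1 - 2 * ((k : ℝ) / (p - i)))) =
      ∑ i ∈ range k, ((k : ℝ) / (p - i)) ^ 2 := sum_congr rfl fun _ _ => by ring
  have hupper := prod_sub_prod_le_sum_sub (fun i hi => (ht i hi).1)
    (fun i hi => (ht i hi).2.1) (fun i hi => (ht i hi).2.2)
  have hlower := prod_mul_sum_sub_le_prod_sub_prod (fun i hi => (ht i hi).1)
    (fun i hi => (ht i hi).2.1) (fun i hi => ((ht i hi).2.1).trans (ht i hi).2.2)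
  rw [hdiff, prod_pow, ← qKP_eq_prod (by omega), ← rKP_eq_prod hp] at hupper hlower
  have hr : 0 ≤ rKP k p := (rKP_eq_prod hp).symm ▸ prod_nonneg fun i hi => (ht i hi).1
  obtain ⟨hS_lo, hS_hi⟩ := sum_sq_div_sub_bounds (p := p) hk (by omega)
  exact ⟨(mul_le_mul_of_nonneg_left hS_lo hr).trans hlower, hupper.trans hS_hi⟩

end Estimates

theorem tendsto_div_of_estimates {α : Type*} {l : Filter α} {x y q r : α → ℝ}
    (hx : Tendsto x l (𝓝 0)) (hx0 : ∀ᶠ n in l, 0 < x n) (hy0 : ∀ᶠ n in l, 0 < y n)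
    (hq : ∀ᶠ n in l, q n * x n ≤ 1 - q n ∧ 1 - q n ≤ x n * (1 + 2 * x n))
    (hr : ∀ᶠ n in l, 1 - 2 * (x n * (1 + 2 * x n)) ≤ r n ∧ r n ≤ 1)
    (hqr : ∀ᶠ n in l, r n * y n ≤ q n ^ 2 - r n ∧ q n ^ 2 - r n ≤ y n * (1 + 2 * x n) ^ 2) :
    Tendsto (fun n => ((1 - q n) ^ 3 + q n ^ 3 - q n * r n) / (y n + x n ^ 3)) l (𝓝 1) := by
  have hw : Tendsto (fun n => 1 + 2 * x n) l (𝓝 1) := by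
    simpa using (hx.const_mul 2).const_add 1
  have hxw : Tendsto (fun n => 1 - x n * (1 + 2 * x n)) l (𝓝 1) := by
    simpa using (hx.mul hw).const_sub 1
  have hq1 : Tendsto q l (𝓝 1) := by
    refine tendsto_of_tendsto_of_tendsto_of_le_of_le' hxw tendsto_const_nhds
      (hq.mono fun n h => by linarith [h.2]) ((hq.and hx0).mono fun n h => ?_)
    nlinarith [h.1.1]
  have hr1 : Tendsto r l (𝓝 1) := by
    refine tendsto_of_tendsto_of_tendsto_of_le_of_le' ?_ tendsto_const_nhds
      (hr.mono fun n h => h.1) (hr.mono fun n h => h.2)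
    simpa using ((hx.mul hw).const_mul 2).const_sub 1
  have hA : Tendsto (fun n => (1 - q n) / x n) l (𝓝 1) :=
    tendsto_of_tendsto_of_tendsto_of_le_of_le' hq1 hw
      ((hq.and hx0).mono fun n h => (le_div_iff₀ h.2).2 h.1.1)
      ((hq.and hx0).mono fun n h => (div_le_iff₀ h.2).2 (by linarith [h.1.2]))
  have hB : Tendsto (fun n => (q n ^ 2 - r n) / y n) l (𝓝 1) :=
    tendsto_of_tendsto_of_tendsto_of_le_of_le' hr1 (by simpa using hw.pow 2)
      ((hqr.and hy0).mono fun n h => (le_div_iff₀ h.2).2 h.1.1)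
      ((hqr.and hy0).mono fun n h => (div_le_iff₀ h.2).2 (by linarith [h.1.2]))
  have hmed := Tendsto.add_div_add (a := fun n => q n * (q n ^ 2 - r n))
    (b := fun n => (1 - q n) ^ 3) hy0 (hx0.mono fun n h => pow_pos h 3)
    (by simpa only [mul_div_assoc, one_mul] using hq1.mul hB)
    (by simpa only [div_pow, one_pow] using hA.pow 3)
  refine hmed.congr fun n => ?_
  ring

theorem beta_asymptotically_tau (K P : ℕ → ℕ)
    (hK : ∀ n, 0 < K n) (hKP : ∀ n, K n ≤ P n)
    (hlim : Tendsto (fun n => ((K n : ℝ) ^ 2) / (P n : ℝ)) atTop (nhds 0)) :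
    Tendsto (fun n => betaKP (K n) (P n) / tauKP (K n) (P n)) atTop (nhds 1) := by
  have hP (n : ℕ) : (0 : ℝ) < P n := by exact_mod_cast (hK n).trans_le (hKP n)
  have hK' (n : ℕ) : (0 : ℝ) < K n := by exact_mod_cast hK n
  have hlarge : ∀ᶠ n in atTop, 3 * K n ≤ P n := by
    filter_upwards [hlim.eventually (gt_mem_nhds (by norm_num : (0 : ℝ) < 1 / 3))] with n hn
    rw [div_lt_iff₀ (hP n)] at hn
    have : 3 * K n ^ 2 < P n := by exact_mod_cast (by linarith : 3 * (K n : ℝ) ^ 2 < P n)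
    nlinarith [hK n]
  refine tendsto_div_of_estimates (q := fun n => qKP (K n) (P n)) (r := fun n => rKP (K n) (P n))
    hlim (.of_forall fun n => by have := hK' n; have := hP n; positivity)
    (.of_forall fun n => by have := hK' n; have := hP n; positivity) ?_ ?_ ?_
  · filter_upwards [hlarge] with n hn using qKP_estimate (hK n) (by omega)
  · filter_upwards [hlarge] with n hn using rKP_estimate (hK n) hn
  · filter_upwards [hlarge] with n hn using sq_qKP_sub_rKP_estimate (hK n) hn
end

section
/- Let K, P : ℕ → ℕ with K_n ≤ P_n and K_n²/P_n → 0. If n³·(K_n³/P_n² + (K_n²/P_n)³) → ∞, then n²·(1 − q(K_n,P_n)) → ∞. -/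
open Filter

/-!
Write `x = K²/P`. Comparing the falling factorials of `P - K` and `P` factor by factor,
`(P + K) (P - K - i) ≤ P (P - i)`, gives `q ≤ (1 + K/P)^(-K) ≤ 1/(1 + x)` by Bernoulli,
so `1 - q ≥ x/2` once `x ≤ 1`. On the other side `(K³/P²)² ≤ x³` and `x⁶ ≤ x³`, so the square
of the quantity in the hypothesis is at most `4 (n² x)³`; hence `n² x → ∞`.
-/

theorem Nat.add_mul_sub_sub_le (k i P : ℕ) : (P + k) * (P - k - i) ≤ P * (P - i) := by
  rcases le_or_gt (k + i) P with h | h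
  · obtain ⟨a, rfl⟩ := Nat.exists_eq_add_of_le h
    rw [Nat.sub_sub, Nat.add_sub_cancel_left, show k + i + a - i = k + a by omega]
    nlinarith
  · simp [Nat.sub_sub, Nat.sub_eq_zero_of_le h.le]

theorem Nat.add_pow_mul_descFactorial_sub_le (k P : ℕ) :
    (P + k) ^ k * (P - k).descFactorial k ≤ P ^ k * P.descFactorial k := by
  simp only [Nat.descFactorial_eq_prod_range, Finset.pow_eq_prod_const, ← Finset.prod_mul_distrib]
  exact Finset.prod_le_prod' fun i _ => Nat.add_mul_sub_sub_le k i P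

theorem Nat.add_pow_mul_choose_sub_le (k P : ℕ) :
    (P + k) ^ k * (P - k).choose k ≤ P ^ k * P.choose k := by
  refine Nat.le_of_mul_le_mul_left ?_ k.factorial_pos
  have h := Nat.add_pow_mul_descFactorial_sub_le k P
  simp only [Nat.descFactorial_eq_factorial_mul_choose] at h
  linarith

theorem one_add_div_pow_mul_choose_sub_le (k P : ℕ) :
    (1 + (k : ℝ) / P) ^ k * ((P - k).choose k : ℝ) ≤ P.choose k := by
  rcases P.eq_zero_or_pos with rfl | hP
  · simp
  have hPr : (0 : ℝ) < P := by exact_mod_cast hP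
  rw [one_add_div hPr.ne', div_pow, div_mul_eq_mul_div, div_le_iff₀ (by positivity),
    mul_comm _ (_ ^ k)]
  exact_mod_cast Nat.add_pow_mul_choose_sub_le k P

theorem qKP_nonneg (k P : ℕ) : 0 ≤ qKP k P := by
  unfold qKP; split_ifs <;> positivity

theorem one_add_sq_div_mul_qKP_le_one (k P : ℕ) : (1 + (k : ℝ) ^ 2 / P) * qKP k P ≤ 1 := by
  unfold qKP
  split_ifs with h
  · have hC : (0 : ℝ) < P.choose k := by exact_mod_cast Nat.choose_pos (by omega)
    rw [← mul_div_assoc, div_le_one hC]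
    have bernoulli : 1 + (k : ℝ) ^ 2 / P ≤ (1 + (k : ℝ) / P) ^ k := by
      rw [sq, mul_div_assoc]
      exact one_add_mul_le_pow (by linarith [show 0 ≤ (k : ℝ) / P by positivity]) k
    exact (mul_le_mul_of_nonneg_right bernoulli (by positivity)).trans
      (one_add_div_pow_mul_choose_sub_le k P)
  · simp

theorem sq_div_two_le_one_sub_qKP (k P : ℕ) (hx : (k : ℝ) ^ 2 / P ≤ 1) :
    (k : ℝ) ^ 2 / P / 2 ≤ 1 - qKP k P := by
  have hq := one_add_sq_div_mul_qKP_le_one k P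
  have hq0 := qKP_nonneg k P
  have hx0 : 0 ≤ (k : ℝ) ^ 2 / P := by positivity
  nlinarith

theorem cube_div_sq_sq_le (K P : ℕ) : ((K : ℝ) ^ 3 / P ^ 2) ^ 2 ≤ ((K : ℝ) ^ 2 / P) ^ 3 := by
  rcases P.eq_zero_or_pos with rfl | hP
  · simp
  have hPr : (1 : ℝ) ≤ P := by exact_mod_cast hP
  rw [div_pow, div_pow, ← pow_mul, ← pow_mul, ← pow_mul]
  gcongr
  norm_num

theorem sq_le_four_mul_cube (n : ℝ) (K P : ℕ) (hx : (K : ℝ) ^ 2 / P ≤ 1) :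
    (n ^ 3 * ((K : ℝ) ^ 3 / P ^ 2 + ((K : ℝ) ^ 2 / P) ^ 3)) ^ 2
      ≤ 4 * (n ^ 2 * ((K : ℝ) ^ 2 / P)) ^ 3 := by
  set a : ℝ := (K : ℝ) ^ 3 / P ^ 2
  set x : ℝ := (K : ℝ) ^ 2 / P
  have ha : a ^ 2 ≤ x ^ 3 := cube_div_sq_sq_le K P
  have hx3 : (x ^ 3) ^ 2 ≤ x ^ 3 := by
    rw [← pow_mul]; exact pow_le_pow_of_le_one (by positivity) hx (by norm_num)
  have hsum : (a + x ^ 3) ^ 2 ≤ 4 * x ^ 3 := by nlinarith [sq_nonneg (a - x ^ 3)]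
  calc (n ^ 3 * (a + x ^ 3)) ^ 2 = n ^ 6 * (a + x ^ 3) ^ 2 := by ring
    _ ≤ n ^ 6 * (4 * x ^ 3) := by gcongr
    _ = 4 * (n ^ 2 * x) ^ 3 := by ring

theorem Filter.Tendsto.atTop_of_pow {α : Type*} {l : Filter α} {g : α → ℝ} {k : ℕ}
    (hk : k ≠ 0) (hg : ∀ a, 0 ≤ g a) (h : Tendsto (fun a => g a ^ k) l atTop) :
    Tendsto g l atTop := by
  refine ((tendsto_rpow_atTop (by positivity : (0 : ℝ) < (k : ℝ)⁻¹)).comp h).congr fun a => ?_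
  exact Real.pow_rpow_inv_natCast (hg a) hk

theorem n_sq_one_sub_q_to_infty_general (K P : ℕ → ℕ)
    (hlim : Tendsto (fun n => ((K n : ℝ) ^ 2) / (P n : ℝ)) atTop (nhds 0))
    (hcond : Tendsto (fun n : ℕ =>
        (n : ℝ) ^ 3 * ((K n : ℝ) ^ 3 / (P n : ℝ) ^ 2 + ((K n : ℝ) ^ 2 / (P n : ℝ)) ^ 3))
      atTop atTop) :
    Tendsto (fun n : ℕ => (n : ℝ) ^ 2 * (1 - qKP (K n) (P n))) atTop atTop := by
  have hx : ∀ᶠ n in atTop, (K n : ℝ) ^ 2 / P n ≤ 1 := hlim.eventually (eventually_le_nhds one_pos)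
  have hcube : Tendsto (fun n : ℕ => ((n : ℝ) ^ 2 * ((K n : ℝ) ^ 2 / P n)) ^ 3) atTop atTop := by
    refine tendsto_atTop_mono' _ ?_
      (((tendsto_pow_atTop two_ne_zero).comp hcond).atTop_div_const (by norm_num : (0 : ℝ) < 4))
    filter_upwards [hx] with n hn
    have := sq_le_four_mul_cube n (K n) (P n) hn
    simp only [Function.comp_apply]
    linarith
  have hg := hcube.atTop_of_pow three_ne_zero fun n => by positivity
  refine tendsto_atTop_mono' _ ?_ (hg.atTop_div_const (by norm_num : (0 : ℝ) < 2))
  filter_upwards [hx] with n hn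
  calc (n : ℝ) ^ 2 * ((K n : ℝ) ^ 2 / P n) / 2
        = (n : ℝ) ^ 2 * ((K n : ℝ) ^ 2 / P n / 2) := by ring
    _ ≤ (n : ℝ) ^ 2 * (1 - qKP (K n) (P n)) := by
      gcongr; exact sq_div_two_le_one_sub_qKP _ _ hn

theorem n_sq_one_sub_q_to_infty (K P : ℕ → ℕ)
    (hK : ∀ n, 0 < K n) (hKP : ∀ n, K n ≤ P n)
    (hlim : Tendsto (fun n => ((K n : ℝ) ^ 2) / (P n : ℝ)) atTop (nhds 0))
    (hcond : Tendsto (fun n : ℕ =>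
        (n : ℝ) ^ 3 * ((K n : ℝ) ^ 3 / (P n : ℝ) ^ 2 + ((K n : ℝ) ^ 2 / (P n : ℝ)) ^ 3))
      atTop atTop) :
    Tendsto (fun n : ℕ => (n : ℝ) ^ 2 * (1 - qKP (K n) (P n))) atTop atTop :=
  n_sq_one_sub_q_to_infty_general K P hlim hcond
end

section
/- Let K, P : ℕ → ℕ with K_n ≤ P_n and K_n²/P_n → 0. Then for all sufficiently large n, c_k(K_n,P_n) ≤ (1 − q(K_n,P_n))^k for every k = 1,…,K_n. -/
/-! Write `q = C(P-K,K)/C(P,K)` and `x = K²/(P-2K+1)`. Bounding `C(K,k) ≤ K^k/k!` and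
comparing `C(P-K,K-k)` with `C(P-K,K)` gives `c_k ≤ q³ x^k / k!`. Counting from below and from
above the `K`-subsets of `[P]` that meet a fixed `K`-set gives `q x ≤ 1 - q ≤ K²/(P-K+1)`.
Once `3K² ≤ P` this forces `q ≥ 1/2`, hence `q³ ≤ q^k k!`, and so
`c_k ≤ (q x)^k ≤ (1 - q)^k`. -/

open Filter

/-- `c_k(K,P) = [C(K,k)·C(P-K,K-k)/C(P,K)]·[C(P-2K+k,K)/C(P,K)]²`. -/
noncomputable def cKP (k K P : ℕ) : ℝ :=
  ((K.choose k * (P - K).choose (K - k) : ℕ) : ℝ) / (P.choose K) *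
    (((P - 2 * K + k).choose K : ℝ) / (P.choose K)) ^ 2

open scoped Nat

namespace Nat

theorem choose_add_mul_choose_le (n r j : ℕ) :
    n.choose (r + 1) + j * n.choose r ≤ (n + j).choose (r + 1) := by
  induction j with
  | zero => simp
  | succ j ih =>
    rw [← add_assoc, choose_succ_succ' (n + j) r]
    have := choose_le_choose r (le_add_right n j)
    linarith [add_mul j 1 (n.choose r)]

theorem choose_le_choose_add_mul_choose (n r j : ℕ) :
    (n + j).choose (r + 1) ≤ n.choose (r + 1) + j * (n + j).choose r := by
  induction j with
  | zero => simp
  | succ j ih =>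
    rw [← add_assoc, choose_succ_succ' (n + j) r]
    have := choose_le_choose r (le_succ (n + j))
    nlinarith

theorem choose_sub_mul_succ_pow_le {K k : ℕ} (m : ℕ) (hk : k ≤ K) :
    (K + m).choose (K - k) * (m + 1) ^ k ≤ (K + m).choose K * K ^ k := by
  induction k with
  | zero => simp
  | succ k ih =>
    obtain ⟨i, hi⟩ : ∃ i, K - k = i + 1 := ⟨K - (k + 1), by omega⟩
    have pascal := choose_succ_right_eq (K + m) i
    rw [← hi, show K + m - i = m + k + 1 by omega] at pascal
    rw [show K - (k + 1) = i by omega]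
    calc (K + m).choose i * (m + 1) ^ (k + 1)
        ≤ (K + m).choose i * (m + k + 1) * (m + 1) ^ k := by
          rw [pow_succ, mul_comm _ (m + 1), ← mul_assoc]; gcongr; omega
      _ = (K - k) * ((K + m).choose (K - k) * (m + 1) ^ k) := by rw [← pascal, hi]; ring
      _ ≤ K * ((K + m).choose K * K ^ k) := Nat.mul_le_mul (Nat.sub_le K k) (ih (by omega))
      _ = (K + m).choose K * K ^ (k + 1) := by ring

theorem factorial_mul_choose_mul_choose_sub_mul_succ_pow_le {K k : ℕ} (m : ℕ) (hk : k ≤ K) :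
    k ! * (K.choose k * (K + m).choose (K - k)) * (m + 1) ^ k ≤ (K + m).choose K * (K ^ 2) ^ k :=
  calc k ! * (K.choose k * (K + m).choose (K - k)) * (m + 1) ^ k
      = K.descFactorial k * ((K + m).choose (K - k) * (m + 1) ^ k) := by
        rw [descFactorial_eq_factorial_mul_choose]; ring
    _ ≤ K ^ k * ((K + m).choose K * K ^ k) :=
        Nat.mul_le_mul (descFactorial_le_pow K k) (choose_sub_mul_succ_pow_le m hk)
    _ = (K + m).choose K * (K ^ 2) ^ k := by ring

end Nat

theorem pow_three_le_pow_mul_factorial {q : ℝ} (hq : 1 / 2 ≤ q) (hq1 : q ≤ 1) (k : ℕ) :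
    q ^ 3 ≤ q ^ k * k ! := by
  have hq0 : 0 ≤ q := by linarith
  rcases k with _ | j
  · simpa using pow_le_one₀ hq0 hq1
  have two_pow_le : (2 : ℝ) ^ j ≤ (j + 1)! := by
    exact_mod_cast (by simpa [add_comm] using Nat.factorial_mul_pow_le_factorial (m := 1) (n := j))
  calc q ^ 3 ≤ q := pow_le_of_le_one hq0 hq1 (by norm_num)
    _ = q * ((1 / 2) ^ j * 2 ^ j) := by rw [← mul_pow]; norm_num
    _ ≤ q * (q ^ j * (j + 1)!) := by gcongr
    _ = q ^ (j + 1) * (j + 1)! := by ring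

theorem one_sub_qKP_le {K P : ℕ} (h : 2 * K ≤ P) :
    1 - qKP K P ≤ K ^ 2 / ((P : ℝ) - K + 1) := by
  rw [qKP, if_pos h]
  rcases Nat.eq_zero_or_pos K with rfl | hK
  · simp
  have hCp : (0 : ℝ) < P.choose K := by exact_mod_cast Nat.choose_pos (by omega)
  have hden : (0 : ℝ) < (P : ℝ) - K + 1 := by
    have : (K : ℝ) ≤ P := by exact_mod_cast (by omega : K ≤ P)
    linarith
  have hockey_stick_upper : (P.choose K : ℝ) ≤ (P - K).choose K + K * P.choose (K - 1) := by
    have := Nat.choose_le_choose_add_mul_choose (P - K) (K - 1) K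
    rw [Nat.sub_add_cancel (by omega), Nat.sub_add_cancel hK] at this
    exact_mod_cast this
  have pascal : (P.choose K : ℝ) * K = P.choose (K - 1) * ((P : ℝ) - K + 1) := by
    have := Nat.choose_succ_right_eq P (K - 1)
    rw [Nat.sub_add_cancel hK, show P - (K - 1) = P - K + 1 by omega] at this
    rw [← Nat.cast_sub (by omega)]
    exact_mod_cast this
  rw [one_sub_div hCp.ne', div_le_div_iff₀ hCp hden]
  calc (P.choose K - (P - K).choose K : ℝ) * ((P : ℝ) - K + 1)
      ≤ K * P.choose (K - 1) * ((P : ℝ) - K + 1) := by gcongr; linarith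
    _ = K ^ 2 * P.choose K := by linear_combination (K : ℝ) * pascal.symm

theorem qKP_mul_le_one_sub {K P : ℕ} (h : 2 * K ≤ P) :
    qKP K P * (K ^ 2 / ((P : ℝ) - 2 * K + 1)) ≤ 1 - qKP K P := by
  rw [qKP, if_pos h]
  rcases Nat.eq_zero_or_pos K with rfl | hK
  · simp
  have hCp : (0 : ℝ) < P.choose K := by exact_mod_cast Nat.choose_pos (by omega)
  have hden : (0 : ℝ) < (P : ℝ) - 2 * K + 1 := by
    have : (2 * K : ℝ) ≤ P := by exact_mod_cast h
    linarith
  have hockey_stick_lower :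
      ((P - K).choose K : ℝ) + K * (P - K).choose (K - 1) ≤ P.choose K := by
    have := Nat.choose_add_mul_choose_le (P - K) (K - 1) K
    rw [Nat.sub_add_cancel (show K ≤ P by omega), Nat.sub_add_cancel hK] at this
    exact_mod_cast this
  have pascal :
      ((P - K).choose K : ℝ) * K = (P - K).choose (K - 1) * ((P : ℝ) - 2 * K + 1) := by
    have := Nat.choose_succ_right_eq (P - K) (K - 1)
    rw [Nat.sub_add_cancel hK, show P - K - (K - 1) = P - 2 * K + 1 by omega] at this
    have cast_eq : ((P - 2 * K + 1 : ℕ) : ℝ) = (P : ℝ) - 2 * K + 1 := by push_cast [h]; ring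
    rw [← cast_eq]
    exact_mod_cast this
  rw [one_sub_div hCp.ne', div_mul_div_comm, div_le_div_iff₀ (by positivity) hCp]
  calc ((P - K).choose K : ℝ) * K ^ 2 * P.choose K
      = K * (P - K).choose (K - 1) * ((P.choose K : ℝ) * ((P : ℝ) - 2 * K + 1)) := by
        linear_combination (K * P.choose K : ℝ) * pascal
    _ ≤ (P.choose K - (P - K).choose K : ℝ) * ((P.choose K : ℝ) * ((P : ℝ) - 2 * K + 1)) :=
        by gcongr; linarith

theorem cKP_le {k K P : ℕ} (hk : k ≤ K) (h : 2 * K ≤ P) :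
    cKP k K P ≤ qKP K P ^ 3 * (K ^ 2 / ((P : ℝ) - 2 * K + 1)) ^ k / k ! := by
  obtain ⟨m, rfl⟩ : ∃ m, P = K + K + m := ⟨P - 2 * K, by omega⟩
  have hCp : (0 : ℝ) < (K + K + m).choose K := by exact_mod_cast Nat.choose_pos (by omega)
  have hF : ((K + K + m : ℕ) : ℝ) - 2 * K + 1 = (m : ℝ) + 1 := by push_cast; ring
  rw [cKP, qKP, if_pos h, hF, show K + K + m - K = K + m by omega,
    show K + K + m - 2 * K + k = m + k by omega]
  have first : ((K.choose k * (K + m).choose (K - k) : ℕ) : ℝ)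
      ≤ (K + m).choose K * ((K : ℝ) ^ 2) ^ k / (k ! * ((m : ℝ) + 1) ^ k) := by
    rw [le_div_iff₀ (by positivity)]
    have := Nat.factorial_mul_choose_mul_choose_sub_mul_succ_pow_le m hk
    calc _ = ((k ! * (K.choose k * (K + m).choose (K - k)) * (m + 1) ^ k : ℕ) : ℝ) := by
          push_cast; ring
      _ ≤ _ := by exact_mod_cast this
  have second : ((m + k).choose K : ℝ) ≤ (K + m).choose K := by
    exact_mod_cast Nat.choose_le_choose K (by omega)
  calc _ ≤ (K + m).choose K * ((K : ℝ) ^ 2) ^ k / (k ! * ((m : ℝ) + 1) ^ k)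
          / (K + K + m).choose K * (((K + m).choose K : ℝ) / (K + K + m).choose K) ^ 2 := by
        gcongr
    _ = _ := by field_simp; rw [div_pow, mul_assoc, mul_div_cancel₀ _ (by positivity)]

theorem cKP_le_one_sub_qKP_pow {k K P : ℕ} (hk : k ≤ K) (hKP : 3 * K ^ 2 ≤ P) :
    cKP k K P ≤ (1 - qKP K P) ^ k := by
  have hKK : K ≤ K ^ 2 := Nat.le_self_pow two_ne_zero K
  have h2K : 2 * K ≤ P := by omega
  have hq0 : 0 ≤ qKP K P := by rw [qKP, if_pos h2K]; positivity
  set q := qKP K P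
  set x := (K : ℝ) ^ 2 / ((P : ℝ) - 2 * K + 1)
  have h2K' : (2 * K : ℝ) ≤ P := by exact_mod_cast h2K
  have hx : 0 ≤ x := div_nonneg (by positivity) (by linarith)
  have hqx : q * x ≤ 1 - q := qKP_mul_le_one_sub h2K
  have hq1 : q ≤ 1 := by nlinarith [mul_nonneg hq0 hx]
  have hq_half : 1 / 2 ≤ q := by
    have hden : (2 * K ^ 2 : ℝ) ≤ (P : ℝ) - K + 1 := by
      have : (2 * K ^ 2 + K : ℝ) ≤ P := by exact_mod_cast (by omega : 2 * K ^ 2 + K ≤ P)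
      linarith
    have : (K : ℝ) ^ 2 / ((P : ℝ) - K + 1) ≤ 1 / 2 := by
      rw [div_le_iff₀ (by linarith)]; linarith
    linarith [one_sub_qKP_le h2K]
  calc cKP k K P ≤ q ^ 3 * x ^ k / k ! := cKP_le hk h2K
    _ ≤ q ^ k * k ! * x ^ k / k ! := by gcongr; exact pow_three_le_pow_mul_factorial hq_half hq1 k
    _ = (q * x) ^ k := by field_simp; ring
    _ ≤ (1 - q) ^ k := pow_le_pow_left₀ (mul_nonneg hq0 hx) hqx k

theorem c_k_le_geometric_eventually_general (K P : ℕ → ℕ)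
    (hlim : Tendsto (fun n => ((K n : ℝ) ^ 2) / (P n : ℝ)) atTop (nhds 0)) :
    ∀ᶠ n in atTop, ∀ k : ℕ, 1 ≤ k → k ≤ K n →
      cKP k (K n) (P n) ≤ (1 - qKP (K n) (P n)) ^ k := by
  filter_upwards [hlim.eventually (gt_mem_nhds (by norm_num : (0 : ℝ) < 1 / 3))]
    with n hn k hk hkK
  rcases Nat.eq_zero_or_pos (P n) with hP | hP
  · -- `C(0, K) = 0` puts a zero denominator in `cKP`, and `qKP K 0 = 0`.
    simp [hP, cKP, qKP, Nat.choose_eq_zero_of_lt (by omega : 0 < K n), show K n ≠ 0 by omega]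
  · refine cKP_le_one_sub_qKP_pow hkK ?_
    rw [div_lt_iff₀ (by exact_mod_cast hP)] at hn
    exact_mod_cast (by linarith : 3 * (K n : ℝ) ^ 2 ≤ P n)

theorem c_k_le_geometric_eventually (K P : ℕ → ℕ)
    (hK : ∀ n, 0 < K n) (hKP : ∀ n, K n ≤ P n)
    (hlim : Tendsto (fun n => ((K n : ℝ) ^ 2) / (P n : ℝ)) atTop (nhds 0)) :
    ∀ᶠ n in atTop, ∀ k : ℕ, 1 ≤ k → k ≤ K n →
      cKP k (K n) (P n) ≤ (1 - qKP (K n) (P n)) ^ k :=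
  c_k_le_geometric_eventually_general K P hlim
end
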